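/- Let X be a complete length space and p ∈ X. Suppose there exist positive numbers L, N₀ and k > 1 such that ρ_p(L) < ∞ and such that for all r > N₀ the natural inclusion-induced map G(p, L, kr) → G(p, r, kr) is an isomorphism. Then there exists R₀ > 0 such that for all r > R₀ the natural inclusion-induced map G(p, r, kr) → π₁(X, p) is an isomorphism. -/

import Mathlib

open Metric unitInterval CategoryTheory
open scoped FundamentalGroupoid ENNReal Manifold

universe u

noncomputable section

/-- The length of a path in a pseudo-emetric space, as the total variation of the
parametrization. -/
def pathLength {X : Type u} [PseudoEMetricSpace X] {x y : X} (γ : Path x y) : ℝ≥0∞ :=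
  eVariationOn γ Set.univ

/-- A (pseudo-e)metric space is a *length space* if the distance between any two points is
the infimum of the lengths of paths joining them. -/
def IsLengthSpace (X : Type u) [PseudoEMetricSpace X] : Prop :=
  ∀ x y : X, edist x y = ⨅ γ : Path x y, pathLength γ

/-- Two loops are homotopic (rel endpoints) *within* the set `S` if there is a path homotopy
between them whose image is contained in `S`. -/
def HomotopicIn {X : Type u} [TopologicalSpace X] {x y : X} (γ₁ γ₂ : Path x y) (S : Set X) :
    Prop :=
  ∃ H : Path.Homotopy γ₁ γ₂, ∀ z : I × I, H z ∈ S

/-- A loop is nullhomotopic within the set `S`. -/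
def NullHomotopicIn {X : Type u} [TopologicalSpace X] {x : X} (γ : Path x x) (S : Set X) :
    Prop :=
  HomotopicIn γ (Path.refl x) S

/-- The homomorphism on fundamental groups induced by a continuous map. -/
def indHom {X Y : Type u} [TopologicalSpace X] [TopologicalSpace Y]
    (f : C(X, Y)) (x : X) : FundamentalGroup X x →* FundamentalGroup Y (f x) :=
  Functor.mapEnd (FundamentalGroupoid.mk x)
    (πₘ (show TopCat.of X ⟶ TopCat.of Y from TopCat.ofHom f))

/-- The class of a loop in the fundamental group. -/
def pathClass {X : Type u} [TopologicalSpace X] {x : X} (γ : Path x x) :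
    FundamentalGroup X x :=
  @FundamentalGroup.fromPath (TopCat.of X) _ x ⟦γ⟧

/-- The basepoint `p` as a point of the closed ball `B̄_p(r)`. -/
def pcb {X : Type u} [MetricSpace X] (p : X) {r : ℝ} (h0 : 0 ≤ r) : closedBall p r :=
  ⟨p, mem_closedBall_self h0⟩

/-- The basepoint `p` as a point of the open ball `B_p(R)`. -/
def ctr {X : Type u} [MetricSpace X] (p : X) {R : ℝ} (hR : 0 < R) : ball p R :=
  ⟨p, mem_ball_self hR⟩

/-- The inclusion of the closed ball `B̄_p(r)` into the open ball `B_p(R)`, `r < R`. -/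
def cbInclusion {X : Type u} [MetricSpace X] (p : X) {r R : ℝ} (h : r < R) :
    C(closedBall p r, ball p R) :=
  ⟨fun z => ⟨z.1, mem_ball.mpr (lt_of_le_of_lt (mem_closedBall.mp z.2) h)⟩,
    Continuous.subtype_mk continuous_subtype_val _⟩

/-- The geometric semi-local fundamental group `G(p,r,R)`: the image of
`π₁(B̄_p(r), p) → π₁(B_p(R), p)`, as a subgroup of `π₁(B_p(R), p)`. -/
def G {X : Type u} [MetricSpace X] (p : X) {r R : ℝ} (h0 : 0 ≤ r) (hrR : r < R) :
    Subgroup (FundamentalGroup (ball p R) (ctr p (h0.trans_lt hrR))) :=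
  (indHom (cbInclusion p hrR) (pcb p h0)).range

/-- The homomorphism `π₁(B_p(R), p) → π₁(X, p)` induced by inclusion. -/
def toAmb {X : Type u} [MetricSpace X] (p : X) {R : ℝ} (hR : 0 < R) :
    FundamentalGroup (ball p R) (ctr p hR) →* FundamentalGroup X p :=
  indHom ⟨Subtype.val, continuous_subtype_val⟩ (ctr p hR)

/-- The homomorphism `π₁(B̄_p(r), p) → π₁(X, p)` induced by inclusion. -/
def cbToAmb {X : Type u} [MetricSpace X] (p : X) {r : ℝ} (h0 : 0 ≤ r) :
    FundamentalGroup (closedBall p r) (pcb p h0) →* FundamentalGroup X p :=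
  indHom ⟨Subtype.val, continuous_subtype_val⟩ (pcb p h0)

end

/-!
For large `r`, the hypothesis says that every class of `G(p, r, kr)` is carried by a loop in
`B̄_p(L)`. Such a loop that dies in `X` already bounds in `B_p(R)` with `R` beyond `ρ_p(L)`, hence
in `B_p(kr)`: this is injectivity. A loop of `X` lies in some `B̄_p(s)` with `s ≥ r`, and the
hypothesis at scale `s` moves its class into `B̄_p(L) ⊆ B̄_p(r)`: this is surjectivity.
-/

section FundamentalGroup

variable {Y Z W : Type u} [TopologicalSpace Y] [TopologicalSpace Z] [TopologicalSpace W]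

theorem pathClass_surjective (y : Y) :
    Function.Surjective (pathClass : Path y y → FundamentalGroup Y y) :=
  Quotient.exists_rep

theorem pathClass_eq_one_iff {y : Y} (γ : Path y y) :
    pathClass γ = 1 ↔ γ.Homotopic (Path.refl y) := by
  refine ⟨Quotient.exact, fun h => ?_⟩
  show (⟦γ⟧ : Path.Homotopic.Quotient y y) = 𝟙 (FundamentalGroupoid.mk y)
  rw [FundamentalGroupoid.id_eq_path_refl]
  exact Quotient.sound h

theorem indHom_comp (g : C(Z, W)) (f : C(Y, Z)) (y : Y) :
    (indHom g (f y)).comp (indHom f y) = indHom (g.comp f) y := by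
  ext a
  obtain ⟨γ, rfl⟩ := pathClass_surjective y a
  rfl

theorem NullHomotopicIn.mono {y : Y} {γ : Path y y} {S T : Set Y} (h : NullHomotopicIn γ S)
    (hST : S ⊆ T) : NullHomotopicIn γ T :=
  let ⟨H, hH⟩ := h
  ⟨H, fun z => hST (hH z)⟩

theorem pathClass_eq_one_of_nullHomotopicIn {S : Set Y} {y : S} (γ : Path y y)
    (h : NullHomotopicIn (γ.map continuous_subtype_val) S) : pathClass γ = 1 := by
  obtain ⟨H, hH⟩ := h
  rw [pathClass_eq_one_iff]
  refine ⟨⟨⟨⟨fun z => ⟨H z, hH z⟩, H.continuous.subtype_mk _⟩, ?_, ?_⟩, ?_⟩⟩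
  · exact fun t => Subtype.ext (H.map_zero_left t)
  · exact fun t => Subtype.ext (H.map_one_left t)
  · exact fun t z hz => Subtype.ext (H.prop' t z hz)

def Path.codRestrict {y : Y} (γ : Path y y) {S : Set Y} (hy : y ∈ S) (h : ∀ t, γ t ∈ S) :
    Path (⟨y, hy⟩ : S) ⟨y, hy⟩ where
  toFun t := ⟨γ t, h t⟩
  continuous_toFun := γ.continuous.subtype_mk _
  source' := Subtype.ext γ.source
  target' := Subtype.ext γ.target

end FundamentalGroup

section Balls

variable {X : Type u} [MetricSpace X] (p : X)

theorem G_map_toAmb {r R : ℝ} (h0 : 0 ≤ r) (hrR : r < R) :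
    (G p h0 hrR).map (toAmb p (h0.trans_lt hrR)) = (cbToAmb p h0).range :=
  (MonoidHom.map_range _ _).trans
    (congrArg MonoidHom.range (indHom_comp _ (cbInclusion p hrR) (pcb p h0)))

theorem cbToAmb_range_mono {r s : ℝ} (hr : 0 ≤ r) (hrs : r ≤ s) :
    (cbToAmb p hr).range ≤ (cbToAmb p (hr.trans hrs)).range := by
  have hcomp := indHom_comp ⟨Subtype.val, continuous_subtype_val⟩
    ⟨Set.inclusion (closedBall_subset_closedBall hrs), continuous_inclusion _⟩ (pcb p hr)
  rintro _ ⟨a, rfl⟩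
  exact ⟨_, DFunLike.congr_fun hcomp a⟩

theorem exists_mem_range_cbToAmb (g : FundamentalGroup X p) :
    ∃ s₀, ∀ s (hs : 0 ≤ s), s₀ ≤ s → g ∈ (cbToAmb p hs).range := by
  obtain ⟨γ, rfl⟩ := pathClass_surjective p g
  obtain ⟨s₀, hs₀⟩ := (isCompact_range γ.continuous).isBounded.subset_closedBall p
  refine ⟨s₀, fun s hs hs₀s => ⟨pathClass (γ.codRestrict (mem_closedBall_self hs) fun t =>
    closedBall_subset_closedBall hs₀s (hs₀ (Set.mem_range_self t))), ?_⟩⟩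
  rfl

theorem eq_one_of_mem_G_of_toAmb_eq_one {L R R' : ℝ} (hL : 0 ≤ L) (hLR' : L < R')
    (hRR' : R ≤ R')
    (hρ : ∀ γ : Path p p, (∀ t, γ t ∈ closedBall p L) →
      γ.Homotopic (Path.refl p) → NullHomotopicIn γ (ball p R))
    {a : FundamentalGroup (ball p R') (ctr p (hL.trans_lt hLR'))} (ha : a ∈ G p hL hLR')
    (h1 : toAmb p _ a = 1) : a = 1 := by
  obtain ⟨b, rfl⟩ := ha
  obtain ⟨α, rfl⟩ := pathClass_surjective _ b
  have hα : pathClass (α.map continuous_subtype_val : Path p p) = 1 := h1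
  refine pathClass_eq_one_of_nullHomotopicIn _ ((hρ _ (fun t => (α t).2) ?_).mono ?_)
  · exact (pathClass_eq_one_iff _).1 hα
  · exact ball_subset_ball hRR'

end Balls

theorem stmt6 {X : Type u} [MetricSpace X]
    (p : X) (L N₀ k : ℝ) (hL : 0 < L) (hN₀ : 0 < N₀) (hk : 1 < k)
    (hρ : ∃ R > 0, ∀ γ : Path p p, (∀ t, γ t ∈ closedBall p L) →
      γ.Homotopic (Path.refl p) → NullHomotopicIn γ (ball p R))
    (hiso : ∀ r, ∀ hr : N₀ < r, ∀ hLkr : L < k * r,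
      G p hL.le hLkr = G p (hN₀.le.trans hr.le) (by nlinarith : r < k * r)) :
    ∃ R₀ > 0, ∀ r, R₀ < r → ∀ h0r : 0 < r,
      Function.Bijective ((toAmb p (h0r.trans (by nlinarith : r < k * r))).comp
        (G p h0r.le (by nlinarith : r < k * r)).subtype) := by
  obtain ⟨R, -, hρ⟩ := hρ
  refine ⟨max (max N₀ L) R, by positivity, fun r hr h0r => ?_⟩
  obtain ⟨⟨hN₀r, hLr⟩, hRr⟩ : (N₀ < r ∧ L < r) ∧ R < r := by simpa only [max_lt_iff] using hr
  have hrkr : r < k * r := by nlinarith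
  have hLkr : L < k * r := hLr.trans hrkr
  refine ⟨?_, fun g => ?_⟩
  · rw [injective_iff_map_eq_one]
    rintro ⟨a, ha⟩ h1
    rw [← hiso r hN₀r hLkr] at ha
    exact Subtype.ext (eq_one_of_mem_G_of_toAmb_eq_one p hL.le hLkr (hRr.trans hrkr).le hρ ha h1)
  · obtain ⟨s₀, hs₀⟩ := exists_mem_range_cbToAmb p g
    have hrs : r ≤ max s₀ r := le_max_right _ _
    have hLks : L < k * max s₀ r := by nlinarith
    have hg : g ∈ (G p h0r.le hrkr).map (toAmb p _) := by
      rw [G_map_toAmb]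
      refine cbToAmb_range_mono p hL.le hLr.le ?_
      rw [← G_map_toAmb p hL.le hLks, hiso _ (hN₀r.trans_le hrs) hLks, G_map_toAmb]
      exact hs₀ _ _ (le_max_left _ _)
    obtain ⟨x, hx, rfl⟩ := Subgroup.mem_map.1 hg
    exact ⟨⟨x, hx⟩, rfl⟩
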